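/- arXiv:2303.00784 — 3 statements merged into one kernel-verified Lean document; each statement's English description precedes it below -/
import Mathlib

section
/- Let n ∈ ℕ, p, q, r ∈ [1,∞), θ ∈ [0,1] satisfy 1/p = θ/q + (1/r − 1/n)(1−θ), and let C > 0 be a constant such that every u ∈ C_c^∞(ℝ^n) satisfies ‖u‖_{L_p(ℝ^n)} ≤ C · ‖u‖_{L_q(ℝ^n)}^θ · ( ∫_{ℝ^n} ( Σ_{i=1}^n |∂_i u(x)|^r ) dx )^{(1−θ)/r}. Then every u ∈ C_c^∞(ℝ^n) satisfies ‖u‖_{L_p(ℝ^n)} ≤ C · n^{(1−θ)/r} · ‖u‖_{L_q(ℝ^n)}^θ · ( Π_{j=1}^n ‖∂_j u‖_{L_r(ℝ^n)} )^{(1−θ)/n}. -/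
open MeasureTheory

/-- The `k`-th partial derivative of a function on `ℝⁿ`. -/
noncomputable def pderiv' {n : ℕ} (f : (Fin n → ℝ) → ℝ) (k : Fin n) (x : Fin n → ℝ) : ℝ :=
  fderiv ℝ f x (Pi.single k 1)



noncomputable def scaleEquiv {n : ℕ} (c : Fin n → ℝ) (hc : ∀ i, c i ≠ 0) :
    (Fin n → ℝ) ≃ₗ[ℝ] (Fin n → ℝ) :=
  LinearEquiv.piCongrRight fun i => LinearEquiv.smulOfNeZero ℝ ℝ (c i) (hc i)

lemma scale_integral {n : ℕ} (c : Fin n → ℝ) (hc : ∀ i, 0 < c i) (F : (Fin n → ℝ) → ℝ) :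
    ∫ x : Fin n → ℝ, F (fun i => c i * x i) = (∏ i, c i)⁻¹ * ∫ x, F x := by
  have hc' : ∀ i, c i ≠ 0 := fun i => (hc i).ne'
  set E := scaleEquiv c hc'
  have hdet : LinearMap.det (E : (Fin n → ℝ) →ₗ[ℝ] (Fin n → ℝ)) = ∏ i, c i := by
    have h2 : ((scaleEquiv c hc') : (Fin n → ℝ) →ₗ[ℝ] (Fin n → ℝ)) =
        Matrix.toLin' (Matrix.diagonal c) := by
      ext x i
      simp [scaleEquiv, Matrix.toLin'_apply, Matrix.mulVec_diagonal]
    rw [show E = scaleEquiv c hc' from rfl, h2, LinearMap.det_toLin', Matrix.det_diagonal]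
  have hprod : 0 < ∏ i, c i := Finset.prod_pos fun i _ => hc i
  have hme : MeasurableEmbedding (E : (Fin n → ℝ) → (Fin n → ℝ)) :=
    (E.toContinuousLinearEquiv.toHomeomorph).measurableEmbedding
  have hmap : Measure.map (E : (Fin n → ℝ) → (Fin n → ℝ)) volume =
      ENNReal.ofReal (|(∏ i, c i)|⁻¹) • volume := by
    have := Real.map_linearMap_volume_pi_eq_smul_volume_pi
      (f := (E : (Fin n → ℝ) →ₗ[ℝ] (Fin n → ℝ))) (by rw [hdet]; exact hprod.ne')
    rw [hdet] at this
    simpa [abs_inv] using this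
  calc ∫ x : Fin n → ℝ, F (fun i => c i * x i) = ∫ x, F (E x) := rfl
    _ = ∫ y, F y ∂(Measure.map (E : (Fin n → ℝ) → (Fin n → ℝ)) volume) :=
        (hme.integral_map F).symm
    _ = (∏ i, c i)⁻¹ * ∫ x, F x := by
        rw [hmap, integral_smul_measure, ENNReal.toReal_ofReal (by positivity),
          abs_of_pos hprod, smul_eq_mul]

lemma scale_props {n : ℕ} (c : Fin n → ℝ) (hc : ∀ i, c i ≠ 0)
    (u : (Fin n → ℝ) → ℝ) (hu : ContDiff ℝ (⊤ : ℕ∞) u) :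
    ContDiff ℝ (⊤ : ℕ∞) (fun x : Fin n → ℝ => u (fun i => c i * x i)) ∧
    ∀ k x, pderiv' (fun x : Fin n → ℝ => u (fun i => c i * x i)) k x
      = c k * pderiv' u k (fun i => c i * x i) := by
  set E := scaleEquiv c hc with hE
  have hEapp : ∀ x : Fin n → ℝ, E x = fun i => c i * x i := fun _ => rfl
  set E' : (Fin n → ℝ) →L[ℝ] (Fin n → ℝ) := E.toContinuousLinearEquiv.toContinuousLinearMap
    with hE'
  have hE'app : ∀ x, E' x = E x := fun _ => rfl
  have hcomp : (fun x : Fin n → ℝ => u (fun i => c i * x i)) = u ∘ E' := by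
    funext x; simp [Function.comp, hE'app, hEapp]
  refine ⟨?_, ?_⟩
  · rw [hcomp]; exact hu.comp E'.contDiff
  · intro k x
    have hdu : DifferentiableAt ℝ u (E' x) := (hu.differentiable (by simp)).differentiableAt
    have hfd : fderiv ℝ (u ∘ E') x = (fderiv ℝ u (E' x)).comp E' := by
      rw [fderiv_comp x hdu E'.differentiableAt, E'.fderiv]
    have hsingle : E' (Pi.single k 1) = c k • (Pi.single k 1 : Fin n → ℝ) := by
      funext i
      simp only [hE'app, hEapp, Pi.smul_apply, smul_eq_mul]
      by_cases h : i = k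
      · subst h; simp
      · simp [Pi.single_apply, h]
    have : pderiv' (u ∘ E') k x = c k * pderiv' u k (E' x) := by
      unfold pderiv'
      rw [hfd]
      simp [ContinuousLinearMap.comp_apply, hsingle]
    rw [hcomp]
    simpa [hE'app, hEapp] using this

lemma hcs_scale {n : ℕ} (c : Fin n → ℝ) (hc : ∀ i, c i ≠ 0)
    (u : (Fin n → ℝ) → ℝ) (hu' : HasCompactSupport u) :
    HasCompactSupport (fun x : Fin n → ℝ => u (fun i => c i * x i)) := by
  have : (fun x : Fin n → ℝ => u (fun i => c i * x i))
      = u ∘ (scaleEquiv c hc).toContinuousLinearEquiv.toHomeomorph := by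
    funext x; rfl
  rw [this]
  exact hu'.comp_homeomorph _

/-- integrability of `|∂ⱼu|^r` -/
lemma integrable_pderiv_rpow {n : ℕ} (r : ℝ) (hr : 1 ≤ r)
    (u : (Fin n → ℝ) → ℝ) (hu : ContDiff ℝ (⊤ : ℕ∞) u) (hu' : HasCompactSupport u) (k : Fin n) :
    Integrable (fun x : Fin n → ℝ => |pderiv' u k x| ^ r) := by
  have hcont : Continuous (pderiv' u k) := by
    have : Continuous (fderiv ℝ u) := (hu.fderiv_right (m := (⊤ : ℕ∞)) le_rfl).continuous
    exact (ContinuousLinearMap.apply ℝ ℝ (Pi.single k 1)).continuous.comp this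
  have hcont2 : Continuous (fun x : Fin n → ℝ => |pderiv' u k x| ^ r) :=
    (continuous_abs.comp hcont).rpow_const fun x => Or.inr (by linarith)
  have hsupp : HasCompactSupport (fun x : Fin n → ℝ => |pderiv' u k x| ^ r) := by
    have h1 : HasCompactSupport (pderiv' u k) := hu'.fderiv_apply ℝ (Pi.single k 1)
    exact h1.comp_left (g := fun y : ℝ => |y| ^ r)
      (by simp [Real.zero_rpow (by positivity : r ≠ 0)])
  exact hcont2.integrable_of_hasCompactSupport hsupp

lemma master {n : ℕ} (hn : 0 < n) (p q r θ C : ℝ)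
    (hp : 1 ≤ p) (hq : 1 ≤ q) (hr : 1 ≤ r) (hθ0 : 0 ≤ θ) (hθ1 : θ ≤ 1) (hC : 0 < C)
    (hcon : 1 / p = θ / q + (1 / r - 1 / (n : ℝ)) * (1 - θ))
    (hGNS : ∀ u : (Fin n → ℝ) → ℝ, ContDiff ℝ (⊤ : ℕ∞) u → HasCompactSupport u →
      (∫ x : Fin n → ℝ, |u x| ^ p) ^ (1 / p) ≤
        C * ((∫ x : Fin n → ℝ, |u x| ^ q) ^ (1 / q)) ^ θ *
          ((∫ x : Fin n → ℝ, ∑ i : Fin n, |pderiv' u i x| ^ r) ^ (1 / r)) ^ (1 - θ))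
    (u : (Fin n → ℝ) → ℝ) (hu : ContDiff ℝ (⊤ : ℕ∞) u) (hu' : HasCompactSupport u)
    (c : Fin n → ℝ) (hc : ∀ i, 0 < c i) :
    (∫ x : Fin n → ℝ, |u x| ^ p) ^ (1 / p) ≤
      C * ((∫ x : Fin n → ℝ, |u x| ^ q) ^ (1 / q)) ^ θ *
        (∏ i, c i) ^ (-((1 - θ) / (n : ℝ))) *
        (((∑ i, (c i) ^ r * ∫ x : Fin n → ℝ, |pderiv' u i x| ^ r) ^ (1 / r)) ^ (1 - θ)) := by
  have hc' : ∀ i, c i ≠ 0 := fun i => (hc i).ne'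
  set v : (Fin n → ℝ) → ℝ := fun x => u (fun i => c i * x i) with hv
  obtain ⟨hv1, hv3⟩ := scale_props c hc' u hu
  have hv2 : HasCompactSupport v := hcs_scale c hc' u hu'
  set Pr := ∏ i, c i with hPr
  have hPr0 : 0 < Pr := Finset.prod_pos fun i _ => hc i
  set P0 := ∫ x : Fin n → ℝ, |u x| ^ p with hP0def
  set Q0 := ∫ x : Fin n → ℝ, |u x| ^ q with hQ0def
  set S := ∑ i, (c i) ^ r * ∫ x : Fin n → ℝ, |pderiv' u i x| ^ r with hSdef
  have hP0 : 0 ≤ P0 := integral_nonneg fun x => Real.rpow_nonneg (abs_nonneg _) _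
  have hQ0 : 0 ≤ Q0 := integral_nonneg fun x => Real.rpow_nonneg (abs_nonneg _) _
  have hS : 0 ≤ S := Finset.sum_nonneg fun i _ =>
    mul_nonneg (Real.rpow_nonneg (hc i).le _)
      (integral_nonneg fun x => Real.rpow_nonneg (abs_nonneg _) _)
  -- integrals of v
  have hA : (∫ x : Fin n → ℝ, |v x| ^ p) = Pr⁻¹ * P0 :=
    scale_integral c hc (fun y => |u y| ^ p)
  have hB : (∫ x : Fin n → ℝ, |v x| ^ q) = Pr⁻¹ * Q0 :=
    scale_integral c hc (fun y => |u y| ^ q)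
  have hD : (∫ x : Fin n → ℝ, ∑ i, |pderiv' v i x| ^ r) = Pr⁻¹ * S := by
    have step1 : ∀ x : Fin n → ℝ, (∑ i, |pderiv' v i x| ^ r)
        = ∑ i, (c i) ^ r * |pderiv' u i (fun j => c j * x j)| ^ r := by
      intro x
      refine Finset.sum_congr rfl fun i _ => ?_
      rw [hv3 i x, abs_mul, Real.mul_rpow (abs_nonneg _) (abs_nonneg _),
        abs_of_pos (hc i)]
    rw [show (∫ x : Fin n → ℝ, ∑ i, |pderiv' v i x| ^ r)
        = ∫ x : Fin n → ℝ, ∑ i, (c i) ^ r * |pderiv' u i (fun j => c j * x j)| ^ r from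
      integral_congr_ae (Filter.Eventually.of_forall step1)]
    rw [scale_integral c hc (fun y => ∑ i, (c i) ^ r * |pderiv' u i y| ^ r)]
    congr 1
    rw [integral_finset_sum _ fun i _ =>
      (integrable_pderiv_rpow r hr u hu hu' i).const_mul _]
    exact Finset.sum_congr rfl fun i _ => integral_const_mul _ _
  have H := hGNS v hv1 hv2
  rw [hA, hB, hD] at H
  -- split the rpow of products
  have e1 : (Pr⁻¹ * P0) ^ (1/p) = Pr ^ (-(1/p)) * P0 ^ (1/p) := by
    rw [Real.mul_rpow (inv_nonneg.mpr hPr0.le) hP0, Real.inv_rpow hPr0.le,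
      ← Real.rpow_neg hPr0.le]
  have e2 : ((Pr⁻¹ * Q0) ^ (1/q)) ^ θ = Pr ^ (-(θ/q)) * (Q0 ^ (1/q)) ^ θ := by
    rw [Real.mul_rpow (inv_nonneg.mpr hPr0.le) hQ0, Real.inv_rpow hPr0.le,
      ← Real.rpow_neg hPr0.le,
      Real.mul_rpow (Real.rpow_nonneg hPr0.le _) (Real.rpow_nonneg hQ0 _),
      ← Real.rpow_mul hPr0.le]
    ring_nf
  have e3 : ((Pr⁻¹ * S) ^ (1/r)) ^ (1-θ) = Pr ^ (-((1-θ)/r)) * (S ^ (1/r)) ^ (1-θ) := by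
    rw [Real.mul_rpow (inv_nonneg.mpr hPr0.le) hS, Real.inv_rpow hPr0.le,
      ← Real.rpow_neg hPr0.le,
      Real.mul_rpow (Real.rpow_nonneg hPr0.le _) (Real.rpow_nonneg hS _),
      ← Real.rpow_mul hPr0.le]
    ring_nf
  rw [e1, e2, e3] at H
  -- exponent bookkeeping
  have hexp : Pr ^ (-(θ/q)) * Pr ^ (-((1-θ)/r))
      = Pr ^ (-((1-θ)/(n:ℝ))) * Pr ^ (-(1/p)) := by
    rw [← Real.rpow_add hPr0, ← Real.rpow_add hPr0]
    congr 1
    rw [hcon]; ring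
  have hpos : (0:ℝ) < Pr ^ (-(1/p)) := Real.rpow_pos_of_pos hPr0 _
  have H2 : Pr ^ (-(1/p)) * P0 ^ (1/p)
      ≤ (C * (Q0 ^ (1/q)) ^ θ * Pr ^ (-((1-θ)/(n:ℝ))) * (S ^ (1/r)) ^ (1-θ))
        * Pr ^ (-(1/p)) := by
    calc Pr ^ (-(1/p)) * P0 ^ (1/p)
        ≤ C * (Pr ^ (-(θ/q)) * (Q0 ^ (1/q)) ^ θ) * (Pr ^ (-((1-θ)/r)) * (S ^ (1/r)) ^ (1-θ)) := H
      _ = (Pr ^ (-(θ/q)) * Pr ^ (-((1-θ)/r))) * (C * (Q0 ^ (1/q)) ^ θ * (S ^ (1/r)) ^ (1-θ)) := by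
          ring
      _ = (Pr ^ (-((1-θ)/(n:ℝ))) * Pr ^ (-(1/p))) * (C * (Q0 ^ (1/q)) ^ θ * (S ^ (1/r)) ^ (1-θ)) := by
          rw [hexp]
      _ = (C * (Q0 ^ (1/q)) ^ θ * Pr ^ (-((1-θ)/(n:ℝ))) * (S ^ (1/r)) ^ (1-θ)) * Pr ^ (-(1/p)) := by
          ring
  have H3 : P0 ^ (1/p) * Pr ^ (-(1/p))
      ≤ (C * (Q0 ^ (1/q)) ^ θ * Pr ^ (-((1-θ)/(n:ℝ))) * (S ^ (1/r)) ^ (1-θ)) * Pr ^ (-(1/p)) := by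
    linarith [H2, (mul_comm (Pr ^ (-(1/p))) (P0 ^ (1/p)))]
  exact le_of_mul_le_mul_right H3 hpos

/-- **Self-improvement of Gagliardo–Nirenberg–Sobolev inequalities via scaling**
(Theorem 1.2 / Theorem 3.1): if the GNS inequality
`‖u‖_{L_p} ≤ C ‖u‖_{L_q}^θ ‖∇u‖_{L_r(ℝⁿ;ℓ_rⁿ)}^{1−θ}` holds for all `u ∈ C_c^∞(ℝⁿ)` under
the constraint `1/p = θ/q + (1/r − 1/n)(1−θ)`, then every `u ∈ C_c^∞(ℝⁿ)` satisfies
`‖u‖_{L_p} ≤ C n^{(1−θ)/r} ‖u‖_{L_q}^θ (∏ⱼ ‖∂ⱼu‖_{L_r})^{(1−θ)/n}`. -/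
theorem stmt_4 {n : ℕ} (hn : 0 < n) (p q r θ C : ℝ)
    (hp : 1 ≤ p) (hq : 1 ≤ q) (hr : 1 ≤ r) (hθ0 : 0 ≤ θ) (hθ1 : θ ≤ 1) (hC : 0 < C)
    (hcon : 1 / p = θ / q + (1 / r - 1 / (n : ℝ)) * (1 - θ))
    (hGNS : ∀ u : (Fin n → ℝ) → ℝ, ContDiff ℝ (⊤ : ℕ∞) u → HasCompactSupport u →
      (∫ x : Fin n → ℝ, |u x| ^ p) ^ (1 / p) ≤
        C * ((∫ x : Fin n → ℝ, |u x| ^ q) ^ (1 / q)) ^ θ *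
          ((∫ x : Fin n → ℝ, ∑ i : Fin n, |pderiv' u i x| ^ r) ^ (1 / r)) ^ (1 - θ))
    (u : (Fin n → ℝ) → ℝ) (hu : ContDiff ℝ (⊤ : ℕ∞) u) (hu' : HasCompactSupport u) :
    (∫ x : Fin n → ℝ, |u x| ^ p) ^ (1 / p) ≤
      C * (n : ℝ) ^ ((1 - θ) / r) * ((∫ x : Fin n → ℝ, |u x| ^ q) ^ (1 / q)) ^ θ *
        (∏ j : Fin n, (∫ x : Fin n → ℝ, |pderiv' u j x| ^ r) ^ (1 / r)) ^ ((1 - θ) / (n : ℝ)) := by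
  have hr0 : r ≠ 0 := by positivity
  have hn0 : (0:ℝ) < (n:ℝ) := Nat.cast_pos.mpr hn
  set a : Fin n → ℝ := fun j => ∫ x : Fin n → ℝ, |pderiv' u j x| ^ r with ha
  have ha0 : ∀ j, 0 ≤ a j := fun j =>
    integral_nonneg fun x => Real.rpow_nonneg (abs_nonneg _) _
  set P := (∫ x : Fin n → ℝ, |u x| ^ p) ^ (1 / p) with hP
  set Q := (∫ x : Fin n → ℝ, |u x| ^ q) ^ (1 / q) with hQ
  have hP0 : 0 ≤ P := Real.rpow_nonneg
    (integral_nonneg fun x => Real.rpow_nonneg (abs_nonneg _) _) _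
  have hQ0 : 0 ≤ Q := Real.rpow_nonneg
    (integral_nonneg fun x => Real.rpow_nonneg (abs_nonneg _) _) _
  by_cases hθ : θ = 1
  · subst hθ
    have := hGNS u hu hu'
    simp only [sub_self, zero_div, Real.rpow_zero, Real.rpow_one, mul_one] at this ⊢
    exact this
  have hθlt : θ < 1 := lt_of_le_of_ne hθ1 hθ
  have hex : 0 < (1 - θ) / (n : ℝ) := div_pos (by linarith) hn0
  by_cases hzero : ∃ j, a j = 0
  · obtain ⟨j, hj⟩ := hzero
    have hRHS : (∏ k : Fin n, (a k) ^ (1/r)) ^ ((1-θ)/(n:ℝ)) = 0 := by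
      rw [Finset.prod_eq_zero (Finset.mem_univ j)
        (by rw [hj]; exact Real.zero_rpow (one_div_ne_zero hr0))]
      exact Real.zero_rpow hex.ne'
    rw [hRHS, mul_zero]
    -- show P ≤ 0 by scaling coordinate j
    set K := C * Q ^ θ * ((∑ i, a i) ^ (1/r)) ^ (1-θ) with hK
    have hK0 : 0 ≤ K := by
      have : 0 ≤ ∑ i, a i := Finset.sum_nonneg fun i _ => ha0 i
      positivity
    have key : ∀ l : ℝ, 1 ≤ l → P ≤ K * l ^ (-((1-θ)/(n:ℝ))) := by
      intro l hl
      have hl0 : (0:ℝ) < l := lt_of_lt_of_le one_pos hl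
      set c : Fin n → ℝ := fun i => if i = j then l else 1 with hcdef
      have hc : ∀ i, 0 < c i := by
        intro i; simp only [hcdef]; split <;> [exact hl0; exact one_pos]
      have hprod : ∏ i, c i = l := by
        simp [hcdef]
      have hsum : (∑ i, (c i) ^ r * a i) = ∑ i, a i := by
        refine Finset.sum_congr rfl fun i _ => ?_
        by_cases h : i = j
        · subst h; simp [hcdef, hj]
        · simp [hcdef, h, Real.one_rpow]
      have := master hn p q r θ C hp hq hr hθ0 hθ1 hC hcon hGNS u hu hu' c hc
      rw [hprod, hsum] at this
      calc P ≤ C * Q ^ θ * l ^ (-((1-θ)/(n:ℝ))) * ((∑ i, a i) ^ (1/r)) ^ (1-θ) := this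
        _ = K * l ^ (-((1-θ)/(n:ℝ))) := by rw [hK]; ring
    have htend : Filter.Tendsto (fun l : ℝ => K * l ^ (-((1-θ)/(n:ℝ))))
        Filter.atTop (nhds 0) := by
      have := (tendsto_rpow_neg_atTop hex).const_mul K
      simpa using this
    have : P ≤ 0 := ge_of_tendsto htend
      (Filter.eventually_atTop.mpr ⟨1, fun l hl => key l hl⟩)
    exact this
  · push_neg at hzero
    have hapos : ∀ j, 0 < a j := fun j => lt_of_le_of_ne (ha0 j) (Ne.symm (hzero j))
    have hprodpos : 0 < ∏ k, a k := Finset.prod_pos fun k _ => hapos k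
    set m := (∏ k, a k) ^ ((n:ℝ)⁻¹) with hm
    have hm0 : 0 < m := Real.rpow_pos_of_pos hprodpos _
    set c : Fin n → ℝ := fun j => (m / a j) ^ (1/r) with hcdef
    have hc : ∀ j, 0 < c j := fun j => Real.rpow_pos_of_pos (div_pos hm0 (hapos j)) _
    have hcr : ∀ j, (c j) ^ r = m / a j := by
      intro j
      rw [hcdef]
      rw [← Real.rpow_mul (by positivity : (0:ℝ) ≤ m / a j)]
      rw [one_div_mul_cancel hr0, Real.rpow_one]
    have hsum : (∑ i, (c i) ^ r * a i) = (n : ℝ) * m := by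
      rw [show (∑ i, (c i) ^ r * a i) = ∑ _i : Fin n, m from
        Finset.sum_congr rfl fun i _ => by
          rw [hcr i, div_mul_cancel₀ _ (hapos i).ne']]
      simp [mul_comm]
    have hmn : m ^ (n : ℕ) = ∏ k, a k := by
      rw [hm, ← Real.rpow_natCast ((∏ k, a k) ^ ((n:ℝ)⁻¹)) n,
        ← Real.rpow_mul hprodpos.le, inv_mul_cancel₀ hn0.ne', Real.rpow_one]
    have hprodc : ∏ i, c i = 1 := by
      rw [show ∏ i, c i = (∏ i, m / a i) ^ (1/r) from
        (Real.finset_prod_rpow Finset.univ _ (fun i _ => by positivity) _)]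
      rw [Finset.prod_div_distrib, Finset.prod_const, Finset.card_univ, Fintype.card_fin,
        hmn, div_self hprodpos.ne', Real.one_rpow]
    have := master hn p q r θ C hp hq hr hθ0 hθ1 hC hcon hGNS u hu hu' c hc
    rw [hprodc, hsum, Real.one_rpow, mul_one] at this
    refine le_trans this (le_of_eq ?_)
    -- C * Q^θ * ((n*m)^{1/r})^{1-θ} = C * n^{(1-θ)/r} * Q^θ * (∏ a_j^{1/r})^{(1-θ)/n}
    have e1 : (((n:ℝ) * m) ^ (1/r)) ^ (1-θ)
        = (n:ℝ) ^ ((1-θ)/r) * m ^ ((1-θ)/r) := by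
      rw [← Real.rpow_mul (by positivity : (0:ℝ) ≤ (n:ℝ)*m),
        show 1/r * (1-θ) = (1-θ)/r by ring, Real.mul_rpow hn0.le hm0.le]
    have e2 : (∏ k : Fin n, (a k) ^ (1/r)) ^ ((1-θ)/(n:ℝ)) = m ^ ((1-θ)/r) := by
      rw [Real.finset_prod_rpow Finset.univ _ (fun k _ => (hapos k).le) _,
        ← Real.rpow_mul hprodpos.le, hm, ← Real.rpow_mul hprodpos.le]
      congr 1
      ring
    rw [e1, e2]
    ring
end

section
/- Fix T > ε > 0, n ∈ ℕ, γ ∈ ℝ \ {0}, and let A, B ∈ M_n(ℝ) be symmetric matrices with AB = BA. Define C(t) = (e^{γt}/γ)·A + t·B for t ∈ ℝ. Let V_ε ∈ M_n(ℝ) be positive definite and let V: [ε,T] → M_n(ℝ) be a continuous function with V(t) positive semidefinite for each t, differentiable on (ε,T), satisfying V(ε) = V_ε and dV(t)/dt ⪰ V(t)² + (e^{γt}A + B)·V(t) + V(t)·(e^{γt}A + B) for all t ∈ (ε,T). Then for all t ∈ [ε,T]: (i) V(t) ⪯ e^{C(t)−C(T)} · ( Id_n + V(T) · ∫_t^T e^{2C(s)−2C(T)}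 ds )^{-1} · V(T) · e^{C(t)−C(T)}; (ii) V(t) ⪰ e^{C(t)−C(ε)} · ( Id_n − V(ε) · ∫_ε^t e^{2C(s)−2C(ε)} ds )^{-1} · V(ε) · e^{C(t)−C(ε)}; moreover the right-hand side of (ii) is well-defined and positive definite for every t ∈ (ε,T). -/
open MeasureTheory

/-- The matrix curve `C(t) = (e^{γt}/γ)·A + t·B`. -/
noncomputable def Cmat {n : ℕ} (A B : Matrix (Fin n) (Fin n) ℝ) (γ t : ℝ) :
    Matrix (Fin n) (Fin n) ℝ :=
  (Real.exp (γ * t) / γ) • A + t • B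

/-!
Since `A` and `B` commute, `D(t) = e^{γt}A + B = C'(t)` commutes with every `C(s)`. Fix a base
point `r` and put `E(t) = e^{C(r) - C(t)}`, so that `E' = -E D`, and `G(t) = e^{2C(t) - 2C(r)}`,
so that `E G E = 1`. Then `W = E V E` satisfies `W' - W G W = E (V' - V² - DV - VD) E ⪰ 0`.
Hence `W' ⪰ 0`, so `W ⪰ W(ε) ≻ 0`, and `(W⁻¹)' = -W⁻¹ W' W⁻¹ ⪯ -G`, so `W⁻¹ + ∫ G` is
decreasing. Comparing its values at `t` and `T` (for `r = T`) or at `ε` and `t` (for `r = ε`),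
inverting, which reverses the order of positive definite matrices, and conjugating back by
`E(t)⁻¹ = e^{C(t) - C(r)}` gives both bounds.
-/

open NormedSpace Matrix
open scoped MatrixOrder ComplexOrder

theorem Commute.smul_add_smul {R : Type*} [Ring R] [Algebra ℝ R] {A B : R} (h : Commute A B)
    (a b c d : ℝ) : Commute (a • A + b • B) (c • A + d • B) :=
  ((((Commute.refl A).smul_left a).smul_right c).add_right ((h.smul_left a).smul_right d)).add_left
    (((h.symm.smul_left b).smul_right c).add_right (((Commute.refl B).smul_left b).smul_right d))

theorem conj_deriv_eq_of_commute {R : Type*} [Ring R] {d e v v' : R} (h : Commute d e) :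
    (e * -d * v + e * v') * e + e * v * (e * -d) = e * (v' - d * v - v * d) * e :=
  calc (e * -d * v + e * v') * e + e * v * (e * -d)
      = e * (v' - d * v) * e - e * v * (e * d) := by noncomm_ring
    _ = e * (v' - d * v - v * d) * e := by rw [← h.eq]; noncomm_ring

theorem conj_mul_conj_of_mul_mul_eq_one {R : Type*} [Ring R] {e g v : R} (h : e * g * e = 1) :
    e * v * e * g * (e * v * e) = e * (v * v) * e :=
  calc e * v * e * g * (e * v * e) = e * v * (e * g * e) * v * e := by simp only [mul_assoc]
    _ = e * (v * v) * e := by rw [h, mul_one]; simp only [mul_assoc]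

section BanachAlgebra

variable {𝔸 : Type*} [NormedRing 𝔸] [NormedAlgebra ℝ 𝔸] [CompleteSpace 𝔸]

theorem hasDerivAt_exp_of_commute {C : ℝ → 𝔸} {C' : 𝔸} {t : ℝ} (hC : HasDerivAt C C' t)
    (hcomm : ∀ s, Commute (C s) (C t)) :
    HasDerivAt (fun s => exp (C s)) (exp (C t) * C') t := by
  have hball : ∀ x : 𝔸, x ∈ Metric.eball 0 (expSeries ℝ 𝔸).radius := by
    simp [expSeries_radius_eq_top]
  have hsplit : (fun s => exp (C s)) = fun s => exp (C t) * exp (C s - C t) := by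
    funext s
    rw [← exp_add_of_commute_of_mem_ball ((hcomm s).symm.sub_right (Commute.refl _)) (hball _)
      (hball _), add_sub_cancel]
  have hshift : HasDerivAt (fun s => exp (C s - C t)) C' t := by
    simpa [Function.comp_def] using (hasFDerivAt_exp_zero (𝕂 := ℝ) (𝔸 := 𝔸)).comp_hasDerivAt_of_eq
      t (hC.sub_const (C t)) (sub_self _).symm
  rw [hsplit]
  exact hshift.const_mul _

theorem HasDerivAt.ringInverse {f : ℝ → 𝔸} {f' : 𝔸} {t : ℝ} (hf : HasDerivAt f f' t)
    (ht : IsUnit (f t)) :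
    HasDerivAt (fun s => Ring.inverse (f s))
      (-(Ring.inverse (f t) * f' * Ring.inverse (f t))) t := by
  obtain ⟨u, hu⟩ := ht
  simpa [← hu, Function.comp_def] using
    (hasFDerivAt_ringInverse (𝕜 := ℝ) u).comp_hasDerivAt_of_eq t hf hu

end BanachAlgebra

section MatrixAlgebra

variable {𝕜 n : Type*} [RCLike 𝕜] [Fintype n] [DecidableEq n]

/-- `Q - P` and `P⁻¹ - Q⁻¹` are the two Schur complements of `[[P⁻¹, 1], [1, Q]]`. -/
theorem Matrix.PosDef.inv_le_inv_of_le {P Q : Matrix n n 𝕜} (hP : P.PosDef) (hPQ : P ≤ Q) :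
    Q⁻¹ ≤ P⁻¹ := by
  have hQ : Q.PosDef := by simpa using hP.add_posSemidef hPQ
  have := hP.inv.isUnit.invertible
  have := hQ.isUnit.invertible
  have hdet := (isUnit_iff_isUnit_det P).mp hP.isUnit
  have hblock := (PosDef.fromBlocks₁₁ (1 : Matrix n n 𝕜) Q hP.inv).mpr
    (by rwa [nonsing_inv_nonsing_inv P hdet, mul_one, conjTranspose_one, one_mul])
  simpa [le_iff] using (PosDef.fromBlocks₂₂ P⁻¹ (1 : Matrix n n 𝕜) hQ).mp (by simpa using hblock)

theorem Matrix.IsHermitian.posSemidef_exp {X : Matrix n n 𝕜} (hX : X.IsHermitian) :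
    (NormedSpace.exp X).PosSemidef := by
  have hhalf : NormedSpace.exp X =
      (NormedSpace.exp ((1 / 2 : ℝ) • X))ᴴ * NormedSpace.exp ((1 / 2 : ℝ) • X) := by
    rw [(hX.smul (IsSelfAdjoint.all (1 / 2 : ℝ))).exp.eq,
      ← Matrix.exp_add_of_commute _ _ (Commute.refl _), ← add_smul]
    norm_num
  rw [hhalf]
  exact posSemidef_conjTranspose_mul_self _

theorem Matrix.inv_one_add_mul_mul {P J : Matrix n n 𝕜} (hP : IsUnit P) :
    (1 + P * J)⁻¹ * P = (P⁻¹ + J)⁻¹ := by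
  have hdet := (isUnit_iff_isUnit_det P).mp hP
  rw [show 1 + P * J = P * (P⁻¹ + J) by rw [mul_add, mul_nonsing_inv _ hdet], mul_inv_rev,
    mul_assoc, nonsing_inv_mul _ hdet, mul_one]

theorem Matrix.inv_one_sub_mul_mul {P J : Matrix n n 𝕜} (hP : IsUnit P) :
    (1 - P * J)⁻¹ * P = (P⁻¹ - J)⁻¹ := by
  simpa [sub_eq_add_neg] using inv_one_add_mul_mul (J := -J) hP

end MatrixAlgebra

section RealMatrixCurves

attribute [local instance] Matrix.linftyOpNormedRing Matrix.linftyOpNormedAlgebra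

namespace Matrix

section EntrywiseIntegral

noncomputable def entrywiseIntegral {m n : Type*} (G : ℝ → Matrix m n ℝ) (a b : ℝ) :
    Matrix m n ℝ :=
  of fun i j => ∫ s in a..b, G s i j

variable {m n : Type*}

@[simp]
theorem entrywiseIntegral_self (G : ℝ → Matrix m n ℝ) (a : ℝ) : entrywiseIntegral G a a = 0 := by
  ext i j
  exact intervalIntegral.integral_same

theorem entrywiseIntegral_symm (G : ℝ → Matrix m n ℝ) (a b : ℝ) :
    entrywiseIntegral G b a = -entrywiseIntegral G a b := by
  ext i j
  exact intervalIntegral.integral_symm a b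

theorem isHermitian_entrywiseIntegral {G : ℝ → Matrix n n ℝ} (hG : ∀ s, (G s).IsHermitian)
    (a b : ℝ) : (entrywiseIntegral G a b).IsHermitian := by
  ext i j
  simp only [entrywiseIntegral, conjTranspose_apply, of_apply, star_trivial]
  exact intervalIntegral.integral_congr fun s _ => (hG s).apply i j

end EntrywiseIntegral

variable {n : Type*} [Fintype n] [DecidableEq n]

theorem hasDerivAt_of_entries {f : ℝ → Matrix n n ℝ} {f' : Matrix n n ℝ} {t : ℝ}
    (h : ∀ i j, HasDerivAt (fun s => f s i j) (f' i j) t) : HasDerivAt f f' t := by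
  have hsum : HasDerivAt (fun s => ∑ i, ∑ j, single i j (f s i j))
      (∑ i, ∑ j, single i j (f' i j)) t := by
    refine HasDerivAt.fun_sum fun i _ => HasDerivAt.fun_sum fun j _ => ?_
    simpa [smul_single, smul_smul] using (h i j).smul_const (single i j (1 : ℝ))
  simpa [← matrix_eq_sum_single] using hsum

theorem monotoneOn_of_hasDerivAt_posSemidef {f f' : ℝ → Matrix n n ℝ} {D : Set ℝ}
    (hD : Convex ℝ D) (hf : ContinuousOn f D) (hherm : ∀ t ∈ D, (f t).IsHermitian)
    (hf' : ∀ t ∈ interior D, HasDerivAt f (f' t) t)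
    (hpsd : ∀ t ∈ interior D, (f' t).PosSemidef) : MonotoneOn f D := by
  intro s hs t ht hst
  refine PosSemidef.of_dotProduct_mulVec_nonneg ((hherm t ht).sub (hherm s hs)) fun x => ?_
  let q : Matrix n n ℝ →L[ℝ] ℝ := LinearMap.toContinuousLinearMap
    ((dotProductBilin ℝ ℝ (star x)).comp ((mulVecBilin ℝ ℝ).flip x))
  have hq : ∀ M, q M = star x ⬝ᵥ M *ᵥ x := fun M => rfl
  have hderiv : ∀ u ∈ interior D, HasDerivAt (fun u => q (f u)) (q (f' u)) u :=
    fun u hu => q.hasFDerivAt.comp_hasDerivAt u (hf' u hu)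
  have hmono : MonotoneOn (fun u => q (f u)) D := by
    refine monotoneOn_of_deriv_nonneg hD (q.continuous.comp_continuousOn hf)
      (fun u hu => (hderiv u hu).differentiableAt.differentiableWithinAt) fun u hu => ?_
    rw [(hderiv u hu).deriv, hq]
    exact (hpsd u hu).dotProduct_mulVec_nonneg x
  simpa [hq, sub_mulVec, dotProduct_sub] using hmono hs ht hst

theorem hasDerivAt_entrywiseIntegral {G : ℝ → Matrix n n ℝ} (hG : Continuous G) (c t : ℝ) :
    HasDerivAt (entrywiseIntegral G c) (G t) t := by
  refine hasDerivAt_of_entries fun i j => ?_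
  have hGij := hG.matrix_elem i j
  exact intervalIntegral.integral_hasDerivAt_right (hGij.intervalIntegrable c t)
    hGij.stronglyMeasurable.stronglyMeasurableAtFilter hGij.continuousAt

theorem continuous_entrywiseIntegral {G : ℝ → Matrix n n ℝ} (hG : Continuous G) (c : ℝ) :
    Continuous (entrywiseIntegral G c) :=
  continuous_iff_continuousAt.mpr fun t => (hasDerivAt_entrywiseIntegral hG c t).continuousAt

theorem posSemidef_entrywiseIntegral {G : ℝ → Matrix n n ℝ} (hG : Continuous G)
    (hGpsd : ∀ t, (G t).PosSemidef) {a b : ℝ} (hab : a ≤ b) :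
    (entrywiseIntegral G a b).PosSemidef := by
  have hmono : Monotone (entrywiseIntegral G a) := by
    rw [← monotoneOn_univ]
    exact monotoneOn_of_hasDerivAt_posSemidef convex_univ
      (continuous_entrywiseIntegral hG a).continuousOn
      (fun t _ => isHermitian_entrywiseIntegral (fun s => (hGpsd s).1) a t)
      (fun t _ => hasDerivAt_entrywiseIntegral hG a t) fun t _ => hGpsd t
  simpa [le_iff] using hmono hab

structure IsRiccatiSupersolution (W G : ℝ → Matrix n n ℝ) (a b : ℝ) : Prop where
  continuousOn : ContinuousOn W (Set.Icc a b)
  isHermitian : ∀ t ∈ Set.Icc a b, (W t).IsHermitian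
  exists_hasDerivAt_le : ∃ W' : ℝ → Matrix n n ℝ,
    ∀ t ∈ Set.Ioo a b, HasDerivAt W (W' t) t ∧ W t * G t * W t ≤ W' t

namespace IsRiccatiSupersolution

variable {W G : ℝ → Matrix n n ℝ} {a b : ℝ}

theorem posDef (hW : IsRiccatiSupersolution W G a b) (hWa : (W a).PosDef)
    (hG : ∀ t, (G t).PosSemidef) {t : ℝ} (ht : t ∈ Set.Icc a b) : (W t).PosDef := by
  obtain ⟨W', hW'⟩ := hW.exists_hasDerivAt_le
  have hmono : MonotoneOn W (Set.Icc a b) := by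
    refine monotoneOn_of_hasDerivAt_posSemidef (f' := W') (convex_Icc a b) hW.continuousOn
      hW.isHermitian (fun s hs => ?_) fun s hs => ?_ <;> rw [interior_Icc] at hs
    · exact (hW' s hs).1
    have hWGW := (hG s).conjTranspose_mul_mul_same (W s)
    rw [(hW.isHermitian s (Set.Ioo_subset_Icc_self hs)).eq] at hWGW
    exact (hWGW.nonneg.trans (hW' s hs).2).posSemidef
  simpa using hWa.add_posSemidef (hmono (Set.left_mem_Icc.mpr (ht.1.trans ht.2)) ht ht.1)

theorem antitoneOn_inv_add_entrywiseIntegral (hW : IsRiccatiSupersolution W G a b)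
    (hWa : (W a).PosDef) (hG : Continuous G) (hGpsd : ∀ t, (G t).PosSemidef) (c : ℝ) :
    AntitoneOn (fun t => (W t)⁻¹ + entrywiseIntegral G c t) (Set.Icc a b) := by
  obtain ⟨W', hW'⟩ := hW.exists_hasDerivAt_le
  have hpd : ∀ t ∈ Set.Icc a b, (W t).PosDef := fun t ht => hW.posDef hWa hGpsd ht
  have hunit : ∀ t ∈ Set.Icc a b, IsUnit (W t) := fun t ht => (hpd t ht).isUnit
  have hinv_cont : ContinuousOn (fun t => (W t)⁻¹) (Set.Icc a b) := by
    simp only [nonsing_inv_eq_ringInverse]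
    intro t ht
    obtain ⟨u, hu⟩ := hunit t ht
    exact (hu ▸ NormedRing.inverse_continuousAt u).comp_continuousWithinAt (hW.continuousOn t ht)
  have hinv_deriv : ∀ t ∈ Set.Ioo a b,
      HasDerivAt (fun t => (W t)⁻¹) (-((W t)⁻¹ * W' t * (W t)⁻¹)) t := by
    simp only [nonsing_inv_eq_ringInverse]
    exact fun t ht => (hW' t ht).1.ringInverse (hunit t (Set.Ioo_subset_Icc_self ht))
  -- `(W⁻¹)' + G = -W⁻¹ (W' - W G W) W⁻¹ ⪯ 0`
  have hneg_mono : MonotoneOn (fun t => -((W t)⁻¹ + entrywiseIntegral G c t)) (Set.Icc a b) := by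
    refine monotoneOn_of_hasDerivAt_posSemidef (f' := fun t => (W t)⁻¹ * W' t * (W t)⁻¹ - G t)
      (convex_Icc a b) (hinv_cont.add (continuous_entrywiseIntegral hG c).continuousOn).neg
      (fun t ht => ((hW.isHermitian t ht).inv.add
        (isHermitian_entrywiseIntegral (fun s => (hGpsd s).1) c t)).neg)
      (fun t ht => ?_) (fun t ht => ?_) <;> rw [interior_Icc] at ht
    · exact ((hinv_deriv t ht).fun_add (hasDerivAt_entrywiseIntegral hG c t)).fun_neg.congr_deriv
        (by abel)
    · have hWt := hpd t (Set.Ioo_subset_Icc_self ht)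
      have hdet := (isUnit_iff_isUnit_det _).mp hWt.isUnit
      have hconj := (le_iff.mp (hW' t ht).2).conjTranspose_mul_mul_same (W t)⁻¹
      rw [hWt.1.inv.eq] at hconj
      simpa [mul_sub, sub_mul, mul_assoc, nonsing_inv_mul_cancel_left _ _ hdet,
        mul_nonsing_inv _ hdet] using hconj
  exact fun s hs t ht hst => neg_le_neg_iff.mp (hneg_mono hs ht hst)

theorem le_inv_add_entrywiseIntegral (hW : IsRiccatiSupersolution W G a b)
    (hWa : (W a).PosDef) (hG : Continuous G) (hGpsd : ∀ t, (G t).PosSemidef) {t : ℝ}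
    (ht : t ∈ Set.Icc a b) : W t ≤ ((W b)⁻¹ + entrywiseIntegral G t b)⁻¹ := by
  have hb : b ∈ Set.Icc a b := Set.right_mem_Icc.mpr (ht.1.trans ht.2)
  have hanti := hW.antitoneOn_inv_add_entrywiseIntegral hWa hG hGpsd b ht hb ht.2
  simp only [entrywiseIntegral_self, add_zero, entrywiseIntegral_symm G t b, ← sub_eq_add_neg]
    at hanti
  have hle : (W b)⁻¹ + entrywiseIntegral G t b ≤ (W t)⁻¹ := le_sub_iff_add_le.mp hanti
  have hdet := (isUnit_iff_isUnit_det _).mp (hW.posDef hWa hGpsd ht).isUnit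
  simpa [nonsing_inv_nonsing_inv _ hdet] using ((hW.posDef hWa hGpsd hb).inv.add_posSemidef
    (posSemidef_entrywiseIntegral hG hGpsd ht.2)).inv_le_inv_of_le hle

theorem posDef_inv_sub_entrywiseIntegral_and_inv_le (hW : IsRiccatiSupersolution W G a b)
    (hWa : (W a).PosDef) (hG : Continuous G) (hGpsd : ∀ t, (G t).PosSemidef) {t : ℝ}
    (ht : t ∈ Set.Icc a b) :
    ((W a)⁻¹ - entrywiseIntegral G a t).PosDef ∧ ((W a)⁻¹ - entrywiseIntegral G a t)⁻¹ ≤ W t := by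
  have ha : a ∈ Set.Icc a b := Set.left_mem_Icc.mpr (ht.1.trans ht.2)
  have hanti := hW.antitoneOn_inv_add_entrywiseIntegral hWa hG hGpsd a ha ht ht.1
  simp only [entrywiseIntegral_self, add_zero] at hanti
  have hle : (W t)⁻¹ ≤ (W a)⁻¹ - entrywiseIntegral G a t := le_sub_iff_add_le.mpr hanti
  have hWt := (hW.posDef hWa hGpsd ht).inv
  have hdet := (isUnit_iff_isUnit_det _).mp (hW.posDef hWa hGpsd ht).isUnit
  exact ⟨by simpa using hWt.add_posSemidef hle,
    by simpa [nonsing_inv_nonsing_inv _ hdet] using hWt.inv_le_inv_of_le hle⟩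

end IsRiccatiSupersolution

end Matrix

variable {n : ℕ} {A B : Matrix (Fin n) (Fin n) ℝ} {γ : ℝ}

theorem commute_Cmat (hAB : Commute A B) (s t : ℝ) : Commute (Cmat A B γ s) (Cmat A B γ t) :=
  hAB.smul_add_smul _ _ _ _

theorem commute_deriv_Cmat (hAB : Commute A B) (s t : ℝ) :
    Commute (Real.exp (γ * s) • A + B) (Cmat A B γ t) := by
  simpa [Cmat] using hAB.smul_add_smul (Real.exp (γ * s)) 1 _ _

theorem hasDerivAt_Cmat (hγ : γ ≠ 0) (t : ℝ) :
    HasDerivAt (Cmat A B γ) (Real.exp (γ * t) • A + B) t := by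
  have hexp : HasDerivAt (fun s => Real.exp (γ * s) / γ) (Real.exp (γ * t)) t :=
    (((hasDerivAt_id t).const_mul γ).exp.div_const γ).congr_deriv (by simp [hγ])
  exact ((hexp.smul_const A).fun_add ((hasDerivAt_id t).smul_const B)).congr_deriv (by simp)

theorem isHermitian_Cmat (hA : A.IsSymm) (hB : B.IsSymm) (t : ℝ) :
    (Cmat A B γ t).IsHermitian := by
  rw [isHermitian_iff_isSymm]
  exact (hA.smul _).add (hB.smul _)

theorem hasDerivAt_exp_Cmat_sub (hAB : Commute A B) (hγ : γ ≠ 0) (r t : ℝ) :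
    HasDerivAt (fun s => exp (Cmat A B γ r - Cmat A B γ s))
      (exp (Cmat A B γ r - Cmat A B γ t) * -(Real.exp (γ * t) • A + B)) t :=
  hasDerivAt_exp_of_commute ((hasDerivAt_Cmat hγ t).const_sub _) fun s =>
    ((commute_Cmat hAB r r).sub_right (commute_Cmat hAB r t)).sub_left
      ((commute_Cmat hAB s r).sub_right (commute_Cmat hAB s t))

theorem commute_deriv_Cmat_exp (hAB : Commute A B) (r s t : ℝ) :
    Commute (Real.exp (γ * t) • A + B) (exp (Cmat A B γ r - Cmat A B γ s)) :=
  ((commute_deriv_Cmat hAB t r).sub_right (commute_deriv_Cmat hAB t s)).exp_right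

theorem isHermitian_exp_Cmat_sub (hA : A.IsSymm) (hB : B.IsSymm) (r t : ℝ) :
    (exp (Cmat A B γ r - Cmat A B γ t)).IsHermitian :=
  ((isHermitian_Cmat hA hB r).sub (isHermitian_Cmat hA hB t)).exp

theorem exp_Cmat_sub_mul_exp_mul_exp (r t : ℝ) :
    exp (Cmat A B γ r - Cmat A B γ t) * exp ((2 : ℝ) • Cmat A B γ t - (2 : ℝ) • Cmat A B γ r) *
      exp (Cmat A B γ r - Cmat A B γ t) = 1 := by
  set X := Cmat A B γ r - Cmat A B γ t
  have hX : (2 : ℝ) • Cmat A B γ t - (2 : ℝ) • Cmat A B γ r = -((2 : ℝ) • X) := by module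
  have hcomm : Commute X (-((2 : ℝ) • X)) := ((Commute.refl X).smul_right _).neg_right
  rw [hX, ← Matrix.exp_add_of_commute _ _ hcomm,
    ← Matrix.exp_add_of_commute _ _ ((Commute.refl X).add_left hcomm.symm),
    show X + -((2 : ℝ) • X) + X = 0 by module, exp_zero]

theorem continuous_exp_two_smul_Cmat_sub (r : ℝ) :
    Continuous fun s => exp ((2 : ℝ) • Cmat A B γ s - (2 : ℝ) • Cmat A B γ r) := by
  have hC : Continuous (Cmat A B γ) := by unfold Cmat; fun_prop
  exact exp_continuous.comp (by fun_prop)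

theorem posSemidef_exp_two_smul_Cmat_sub (hA : A.IsSymm) (hB : B.IsSymm) (r s : ℝ) :
    (exp ((2 : ℝ) • Cmat A B γ s - (2 : ℝ) • Cmat A B γ r)).PosSemidef :=
  (((isHermitian_Cmat hA hB s).smul (IsSelfAdjoint.all _)).sub
    ((isHermitian_Cmat hA hB r).smul (IsSelfAdjoint.all _))).posSemidef_exp

theorem posDef_conj_exp_Cmat_sub (hA : A.IsSymm) (hB : B.IsSymm) (r t : ℝ)
    {V : Matrix (Fin n) (Fin n) ℝ} (hV : V.PosDef) :
    (exp (Cmat A B γ r - Cmat A B γ t) * V * exp (Cmat A B γ r - Cmat A B γ t)).PosDef := by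
  have h := (IsUnit.posDef_star_left_conjugate_iff
    (Matrix.isUnit_exp (Cmat A B γ r - Cmat A B γ t))).mpr hV
  rwa [star_eq_conjTranspose, (isHermitian_exp_Cmat_sub hA hB r t).eq] at h

theorem conj_exp_Cmat_sub_cancel (r t : ℝ) (V : Matrix (Fin n) (Fin n) ℝ) :
    exp (Cmat A B γ t - Cmat A B γ r) *
        (exp (Cmat A B γ r - Cmat A B γ t) * V * exp (Cmat A B γ r - Cmat A B γ t)) *
      exp (Cmat A B γ t - Cmat A B γ r) = V := by
  have hdet := (isUnit_iff_isUnit_det _).mp (Matrix.isUnit_exp (Cmat A B γ r - Cmat A B γ t))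
  rw [← neg_sub, Matrix.exp_neg]
  simp only [mul_assoc, nonsing_inv_mul_cancel_left _ _ hdet, mul_nonsing_inv _ hdet, mul_one]

theorem le_conj_exp_Cmat_sub_of_conj_le (hA : A.IsSymm) (hB : B.IsSymm) {r t : ℝ}
    {V X : Matrix (Fin n) (Fin n) ℝ}
    (h : exp (Cmat A B γ r - Cmat A B γ t) * V * exp (Cmat A B γ r - Cmat A B γ t) ≤ X) :
    V ≤ exp (Cmat A B γ t - Cmat A B γ r) * X * exp (Cmat A B γ t - Cmat A B γ r) := by
  simpa only [conj_exp_Cmat_sub_cancel] using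
    (isHermitian_exp_Cmat_sub (γ := γ) hA hB t r).isSelfAdjoint.conjugate_le_conjugate h

theorem conj_exp_Cmat_sub_le_of_le_conj (hA : A.IsSymm) (hB : B.IsSymm) {r t : ℝ}
    {V X : Matrix (Fin n) (Fin n) ℝ}
    (h : X ≤ exp (Cmat A B γ r - Cmat A B γ t) * V * exp (Cmat A B γ r - Cmat A B γ t)) :
    exp (Cmat A B γ t - Cmat A B γ r) * X * exp (Cmat A B γ t - Cmat A B γ r) ≤ V := by
  simpa only [conj_exp_Cmat_sub_cancel] using
    (isHermitian_exp_Cmat_sub (γ := γ) hA hB t r).isSelfAdjoint.conjugate_le_conjugate h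

theorem isRiccatiSupersolution_conj_exp_Cmat (hA : A.IsSymm) (hB : B.IsSymm)
    (hAB : Commute A B) (hγ : γ ≠ 0) {V V' : ℝ → Matrix (Fin n) (Fin n) ℝ} {a b : ℝ}
    (hV : ContinuousOn V (Set.Icc a b)) (hVherm : ∀ t ∈ Set.Icc a b, (V t).IsHermitian)
    (hV' : ∀ t ∈ Set.Ioo a b, HasDerivAt V (V' t) t)
    (hbern : ∀ t ∈ Set.Ioo a b, V t * V t + (Real.exp (γ * t) • A + B) * V t +
      V t * (Real.exp (γ * t) • A + B) ≤ V' t) (r : ℝ) :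
    IsRiccatiSupersolution
      (fun t => exp (Cmat A B γ r - Cmat A B γ t) * V t * exp (Cmat A B γ r - Cmat A B γ t))
      (fun t => exp ((2 : ℝ) • Cmat A B γ t - (2 : ℝ) • Cmat A B γ r)) a b := by
  set E := fun t => exp (Cmat A B γ r - Cmat A B γ t)
  set D := fun t => Real.exp (γ * t) • A + B
  have hE_deriv := hasDerivAt_exp_Cmat_sub hAB hγ r
  have hE_cont : Continuous E :=
    continuous_iff_continuousAt.mpr fun t => (hE_deriv t).continuousAt
  refine ⟨(hE_cont.continuousOn.mul hV).mul hE_cont.continuousOn, fun t ht => ?_,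
    fun t => E t * (V' t - D t * V t - V t * D t) * E t, fun t ht => ⟨?_, ?_⟩⟩
  · have hEVE := isHermitian_conjTranspose_mul_mul (E t) (hVherm t ht)
    rwa [(isHermitian_exp_Cmat_sub hA hB r t).eq] at hEVE
  · exact (((hE_deriv t).fun_mul (hV' t ht)).fun_mul (hE_deriv t)).congr_deriv
      (conj_deriv_eq_of_commute (commute_deriv_Cmat_exp hAB r t t))
  · have hconj := (le_iff.mp (hbern t ht)).conjTranspose_mul_mul_same (E t)
    rw [(isHermitian_exp_Cmat_sub hA hB r t).eq] at hconj
    have hsub : V' t - D t * V t - V t * D t - V t * V t =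
        V' t - (V t * V t + D t * V t + V t * D t) := by abel
    rwa [le_iff, conj_mul_conj_of_mul_mul_eq_one (exp_Cmat_sub_mul_exp_mul_exp r t), ← sub_mul,
      ← mul_sub, hsub]

end RealMatrixCurves

theorem stmt_12_general {n : ℕ} (ε T : ℝ) (hεT : ε < T)
    (γ : ℝ) (hγ : γ ≠ 0)
    (A B : Matrix (Fin n) (Fin n) ℝ) (hA : A.IsSymm) (hB : B.IsSymm)
    (hAB : A * B = B * A)
    (V V' : ℝ → Matrix (Fin n) (Fin n) ℝ)
    (hVcont : ContinuousOn V (Set.Icc ε T))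
    (hVpsd : ∀ t ∈ Set.Icc ε T, (V t).PosSemidef)
    (hVε : (V ε).PosDef)
    (hVderiv : ∀ t ∈ Set.Ioo ε T, ∀ i j, HasDerivAt (fun s => V s i j) (V' t i j) t)
    (hODI : ∀ t ∈ Set.Ioo ε T,
      (V' t - (V t * V t + (Real.exp (γ * t) • A + B) * V t +
        V t * (Real.exp (γ * t) • A + B))).PosSemidef) :
    (∀ t ∈ Set.Icc ε T,
      (NormedSpace.exp (Cmat A B γ t - Cmat A B γ T) *
          ((1 : Matrix (Fin n) (Fin n) ℝ) + V T * Matrix.of fun i j =>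
            ∫ s in t..T,
              (NormedSpace.exp ((2 : ℝ) • Cmat A B γ s - (2 : ℝ) • Cmat A B γ T)) i j)⁻¹ *
          V T * NormedSpace.exp (Cmat A B γ t - Cmat A B γ T) - V t).PosSemidef) ∧
    (∀ t ∈ Set.Icc ε T,
      (V t - NormedSpace.exp (Cmat A B γ t - Cmat A B γ ε) *
          ((1 : Matrix (Fin n) (Fin n) ℝ) - V ε * Matrix.of fun i j =>
            ∫ s in ε..t,
              (NormedSpace.exp ((2 : ℝ) • Cmat A B γ s - (2 : ℝ) • Cmat A B γ ε)) i j)⁻¹ *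
          V ε * NormedSpace.exp (Cmat A B γ t - Cmat A B γ ε)).PosSemidef) ∧
    (∀ t ∈ Set.Ioo ε T,
      (NormedSpace.exp (Cmat A B γ t - Cmat A B γ ε) *
          ((1 : Matrix (Fin n) (Fin n) ℝ) - V ε * Matrix.of fun i j =>
            ∫ s in ε..t,
              (NormedSpace.exp ((2 : ℝ) • Cmat A B γ s - (2 : ℝ) • Cmat A B γ ε)) i j)⁻¹ *
          V ε * NormedSpace.exp (Cmat A B γ t - Cmat A B γ ε)).PosDef) := by
  have hsol := fun r => isRiccatiSupersolution_conj_exp_Cmat hA hB hAB hγ hVcont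
    (fun t ht => (hVpsd t ht).1) (fun t ht => hasDerivAt_of_entries (hVderiv t ht)) hODI r
  have hG := continuous_exp_two_smul_Cmat_sub (A := A) (B := B) (γ := γ)
  have hGpsd := posSemidef_exp_two_smul_Cmat_sub (γ := γ) hA hB
  have hWε (r : ℝ) := posDef_conj_exp_Cmat_sub (γ := γ) hA hB r ε hVε
  have hW_self (r : ℝ) : NormedSpace.exp (Cmat A B γ r - Cmat A B γ r) * V r *
      NormedSpace.exp (Cmat A B γ r - Cmat A B γ r) = V r := by
    simp
  have hlower (t : ℝ) (ht : t ∈ Set.Icc ε T) :=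
    (hsol ε).posDef_inv_sub_entrywiseIntegral_and_inv_le (hWε ε) (hG ε) (hGpsd ε) ht
  simp only [hW_self] at hlower
  refine ⟨fun t ht => ?_, fun t ht => ?_, fun t ht => ?_⟩
  · have hVT := hW_self T ▸ (hsol T).posDef (hWε T) (hGpsd T) (Set.right_mem_Icc.mpr hεT.le)
    have h := (hsol T).le_inv_add_entrywiseIntegral (hWε T) (hG T) (hGpsd T) ht
    rw [hW_self, ← inv_one_add_mul_mul hVT.isUnit] at h
    simpa only [mul_assoc, entrywiseIntegral] using
      le_iff.mp (le_conj_exp_Cmat_sub_of_conj_le hA hB h)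
  · have h := conj_exp_Cmat_sub_le_of_le_conj hA hB (hlower t ht).2
    rw [← inv_one_sub_mul_mul hVε.isUnit] at h
    simpa only [mul_assoc, entrywiseIntegral] using le_iff.mp h
  · have h := posDef_conj_exp_Cmat_sub (γ := γ) hA hB t ε
      (hlower t (Set.Ioo_subset_Icc_self ht)).1.inv
    rw [← inv_one_sub_mul_mul hVε.isUnit] at h
    simpa only [mul_assoc, entrywiseIntegral] using h

/-- **Matrix Bernoulli differential inequalities** (Lemma 8.7): if a positive-semidefinite
matrix curve `V` on `[ε,T]`, positive definite at `ε`, satisfies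
`dV/dt ⪰ V² + (e^{γt}A+B)V + V(e^{γt}A+B)`, then with `C(t) = (e^{γt}/γ)A + tB`,
(i) `V(t) ⪯ e^{C(t)−C(T)}(Id + V(T)∫ₜᵀ e^{2C(s)−2C(T)}ds)⁻¹ V(T) e^{C(t)−C(T)}`,
(ii) `V(t) ⪰ e^{C(t)−C(ε)}(Id − V(ε)∫_ε^t e^{2C(s)−2C(ε)}ds)⁻¹ V(ε) e^{C(t)−C(ε)}`,
and the right-hand side of (ii) is positive definite on `(ε,T)`. -/
theorem stmt_12 {n : ℕ} (ε T : ℝ) (hε : 0 < ε) (hεT : ε < T)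
    (γ : ℝ) (hγ : γ ≠ 0)
    (A B : Matrix (Fin n) (Fin n) ℝ) (hA : A.IsSymm) (hB : B.IsSymm)
    (hAB : A * B = B * A)
    (V V' : ℝ → Matrix (Fin n) (Fin n) ℝ)
    (hVcont : ContinuousOn V (Set.Icc ε T))
    (hVpsd : ∀ t ∈ Set.Icc ε T, (V t).PosSemidef)
    (hVε : (V ε).PosDef)
    (hVderiv : ∀ t ∈ Set.Ioo ε T, ∀ i j, HasDerivAt (fun s => V s i j) (V' t i j) t)
    (hODI : ∀ t ∈ Set.Ioo ε T,
      (V' t - (V t * V t + (Real.exp (γ * t) • A + B) * V t +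
        V t * (Real.exp (γ * t) • A + B))).PosSemidef) :
    (∀ t ∈ Set.Icc ε T,
      (NormedSpace.exp (Cmat A B γ t - Cmat A B γ T) *
          ((1 : Matrix (Fin n) (Fin n) ℝ) + V T * Matrix.of fun i j =>
            ∫ s in t..T,
              (NormedSpace.exp ((2 : ℝ) • Cmat A B γ s - (2 : ℝ) • Cmat A B γ T)) i j)⁻¹ *
          V T * NormedSpace.exp (Cmat A B γ t - Cmat A B γ T) - V t).PosSemidef) ∧
    (∀ t ∈ Set.Icc ε T,
      (V t - NormedSpace.exp (Cmat A B γ t - Cmat A B γ ε) *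
          ((1 : Matrix (Fin n) (Fin n) ℝ) - V ε * Matrix.of fun i j =>
            ∫ s in ε..t,
              (NormedSpace.exp ((2 : ℝ) • Cmat A B γ s - (2 : ℝ) • Cmat A B γ ε)) i j)⁻¹ *
          V ε * NormedSpace.exp (Cmat A B γ t - Cmat A B γ ε)).PosSemidef) ∧
    (∀ t ∈ Set.Ioo ε T,
      (NormedSpace.exp (Cmat A B γ t - Cmat A B γ ε) *
          ((1 : Matrix (Fin n) (Fin n) ℝ) - V ε * Matrix.of fun i j =>
            ∫ s in ε..t,
              (NormedSpace.exp ((2 : ℝ) • Cmat A B γ s - (2 : ℝ) • Cmat A B γ ε)) i j)⁻¹ *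
          V ε * NormedSpace.exp (Cmat A B γ t - Cmat A B γ ε)).PosDef) :=
  stmt_12_general ε T hεT γ hγ A B hA hB hAB V V' hVcont hVpsd hVε hVderiv hODI
end

section
/- Fix T > 0, n ∈ ℕ, α, β ∈ ℝ, and let W: [0,T] → M_n(ℝ) be a differentiable family of symmetric matrices satisfying dW(t)/dt ⪰ W(t)² + α·W(t) + β·Id_n for all t ∈ [0,T]. Fix a unit vector θ ∈ ℝ^n, set φ(t) = ⟨W(t)θ, θ⟩ and c = φ(0), and set λ = β − α²/4. Define ξ_λ(t) = √λ · tan(√λ·t + c_1) if λ > 0, ξ_λ(t) = −1/(t + c_2) if λ = 0, and ξ_λ(t) = −√(−λ) · tanh(√(−λ)·t + c_3) if λ < 0, where c_1 = arctan( (c + α/2)/√λ ), c_2 = −2/(2c + α) (assuming 2c + α ≠ 0 in the case λ = 0), and c_3 = arctanh( −(c + α/2)/√(−λ) ) (assuming |c + α/2| < √(−λ) in the case λ < 0). Then φ(t) ≥ ξ_λ(t) − α/2 for every t ∈ [0,T] at which ξ_λ is defined and finite (i.e., √λ·t + c_1 ∈ (−π/2, π/2) when λ > 0, and t + c_2 ≠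 0 when λ = 0). -/
/-!
Testing `dW/dt ⪰ W² + αW + β` against the unit vector `θ`, and using Cauchy–Schwarz in the form
`⟨W²θ, θ⟩ = |Wθ|² ≥ ⟨Wθ, θ⟩²`, shows that `ψ = φ + α/2` is a supersolution of the scalar Riccati
equation `ξ' = ξ² + λ`. The functions `ξ_λ` are the explicit solutions of this equation with
`ξ_λ(0) = ψ(0)`, and a Gronwall-type comparison gives `ξ_λ ≤ ψ` on every interval `[0, t]` on which
`ξ_λ` stays finite. If `λ = 0` and `ξ_λ` has its pole inside `(0, t)`, the comparison up to the pole
would force the continuous `ψ` to blow up, so that case does not occur.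
-/

open MeasureTheory

/-- The inverse hyperbolic tangent `arctanh x = (1/2) log((1+x)/(1−x))`. -/
noncomputable def arctanh (x : ℝ) : ℝ := Real.log ((1 + x) / (1 - x)) / 2

open Set Filter Topology Real Matrix

theorem Real.hasDerivAt_tanh (x : ℝ) : HasDerivAt tanh (1 - tanh x ^ 2) x := by
  have hcosh : cosh x ≠ 0 := (cosh_pos x).ne'
  have h := (hasDerivAt_sinh x).div (hasDerivAt_cosh x) hcosh
  rw [show sinh / cosh = tanh from funext fun y => (tanh_eq_sinh_div_cosh y).symm] at h
  refine h.congr_deriv ?_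
  rw [tanh_eq_sinh_div_cosh]
  field_simp

theorem tanh_arctanh {x : ℝ} (hx : x ∈ Ioo (-1) 1) : tanh (arctanh x) = x := by
  rw [show arctanh x = artanh x by
    rw [arctanh, artanh_eq_half_log (Ioo_subset_Icc_self hx)]; ring]
  exact Real.tanh_artanh hx

theorem nonpos_of_deriv_right_le_mul_of_pos {f f' : ℝ → ℝ} {a b K : ℝ}
    (hf : ContinuousOn f (Icc a b)) (hf' : ∀ x ∈ Ico a b, HasDerivWithinAt f (f' x) (Ici x) x)
    (ha : f a ≤ 0) (bound : ∀ x ∈ Ico a b, 0 < f x → f' x ≤ K * f x) :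
    ∀ ⦃x⦄, x ∈ Icc a b → f x ≤ 0 := by
  -- `f` cannot catch up with any barrier `δ e^{(K+1)(x-a)}`, `δ > 0`, which grows strictly faster.
  have barrier : ∀ δ > 0, ∀ ⦃x⦄, x ∈ Icc a b → f x ≤ δ * exp ((K + 1) * (x - a)) := by
    intro δ hδ
    have hB : ∀ x, HasDerivAt (fun y => δ * exp ((K + 1) * (y - a)))
        ((K + 1) * (δ * exp ((K + 1) * (x - a)))) x := fun x => by
      refine ((((hasDerivAt_id' x).sub_const a).const_mul (K + 1)).exp.const_mul δ).congr_deriv ?_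
      ring
    refine image_le_of_deriv_right_lt_deriv_boundary hf hf' ?_ hB fun x hx hfx => ?_
    · simpa using ha.trans hδ.le
    · have hpos : 0 < f x := hfx ▸ by positivity
      calc f' x ≤ K * f x := bound x hx hpos
        _ < (K + 1) * (δ * exp ((K + 1) * (x - a))) := by rw [← hfx]; linarith
  intro x hx
  refine le_of_forall_pos_le_add fun ε hε => ?_
  have hE := exp_pos ((K + 1) * (x - a))
  calc f x ≤ ε / exp ((K + 1) * (x - a)) * exp ((K + 1) * (x - a)) :=
        barrier _ (div_pos hε hE) hx
    _ = 0 + ε := by field_simp; ring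

theorem riccati_subsolution_le_supersolution {a b lam : ℝ} {ξ ξ' ψ ψ' : ℝ → ℝ}
    (hξ : ∀ x ∈ Icc a b, HasDerivAt ξ (ξ' x) x) (hξ' : ∀ x ∈ Icc a b, ξ' x ≤ ξ x ^ 2 + lam)
    (hψ : ∀ x ∈ Icc a b, HasDerivAt ψ (ψ' x) x) (hψ' : ∀ x ∈ Icc a b, ψ x ^ 2 + lam ≤ ψ' x)
    (ha : ξ a ≤ ψ a) : ∀ ⦃x⦄, x ∈ Icc a b → ξ x ≤ ψ x := by
  have hdiff : ∀ x ∈ Icc a b, HasDerivAt (fun y => ξ y - ψ y) (ξ' x - ψ' x) x :=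
    fun x hx => (hξ x hx).sub (hψ x hx)
  obtain ⟨K, hK⟩ := isCompact_Icc.exists_bound_of_continuousOn (f := fun y => ξ y + ψ y)
    fun x hx => ((hξ x hx).continuousAt.add (hψ x hx).continuousAt).continuousWithinAt
  intro x hx
  refine sub_nonpos.1 <| nonpos_of_deriv_right_le_mul_of_pos (K := K)
    (fun y hy => (hdiff y hy).continuousAt.continuousWithinAt)
    (fun y hy => (hdiff y (Ico_subset_Icc_self hy)).hasDerivWithinAt) (sub_nonpos.2 ha)
    (fun y hy hpos => ?_) hx
  have hy := Ico_subset_Icc_self hy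
  have hsum : ξ y + ψ y ≤ K := (le_abs_self _).trans (hK y hy)
  -- `ξ' - ψ' ≤ ξ² - ψ² = (ξ + ψ)(ξ - ψ)`
  nlinarith [hξ' y hy, hψ' y hy, mul_le_mul_of_nonneg_right hsum hpos.le]

theorem hasDerivAt_mul_tan_riccati {r c x : ℝ} (hx : cos (r * x + c) ≠ 0) :
    HasDerivAt (fun s => r * tan (r * s + c)) ((r * tan (r * x + c)) ^ 2 + r ^ 2) x := by
  refine (((hasDerivAt_tan hx).comp x
    (((hasDerivAt_id' x).const_mul r).add_const c)).const_mul r).congr_deriv ?_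
  rw [← inv_one_add_tan_sq hx]
  field_simp
  ring

theorem hasDerivAt_neg_inv_riccati {c x : ℝ} (hx : x + c ≠ 0) :
    HasDerivAt (fun s => -(1 / (s + c))) ((-(1 / (x + c))) ^ 2) x := by
  refine ((hasDerivAt_const x (1 : ℝ)).fun_div
    ((hasDerivAt_id' x).add_const c) hx).neg.congr_deriv ?_
  field_simp
  ring

theorem hasDerivAt_neg_mul_tanh_riccati (r c x : ℝ) :
    HasDerivAt (fun s => -(r * tanh (r * s + c))) ((-(r * tanh (r * x + c))) ^ 2 - r ^ 2) x := by
  refine (((hasDerivAt_tanh _).comp x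
    (((hasDerivAt_id' x).const_mul r).add_const c)).const_mul r).neg.congr_deriv ?_
  ring

theorem not_eventually_inv_sub_le {ψ : ℝ → ℝ} {x₀ : ℝ} (hψ : ContinuousAt ψ x₀) :
    ¬ ∀ᶠ s in 𝓝[<] x₀, (x₀ - s)⁻¹ ≤ ψ s := by
  intro h
  have hsub : Tendsto (fun s => x₀ - s) (𝓝[<] x₀) (𝓝[>] 0) := by
    refine tendsto_nhdsWithin_iff.2 ⟨?_, eventually_nhdsWithin_of_forall fun s hs => ?_⟩
    · simpa using (tendsto_const_nhds.sub tendsto_id :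
        Tendsto (fun s => x₀ - s) (𝓝 x₀) _).mono_left (nhdsWithin_le_nhds (s := Iio x₀))
    · simpa using hs
  exact not_tendsto_atTop_of_tendsto_nhds (hψ.tendsto.mono_left nhdsWithin_le_nhds)
    (tendsto_atTop_mono' _ h (tendsto_inv_nhdsGT_zero.comp hsub))

section RiccatiSupersolution

variable {T lam : ℝ} {ψ ψ' : ℝ → ℝ}

theorem tan_le_of_riccati_supersolution (hψ : ∀ s ∈ Icc 0 T, HasDerivAt ψ (ψ' s) s)
    (hψ' : ∀ s ∈ Icc 0 T, ψ s ^ 2 + lam ≤ ψ' s) (hlam : 0 < lam) {t : ℝ} (ht : t ∈ Icc 0 T)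
    (hlt : √lam * t + arctan (ψ 0 / √lam) < π / 2) :
    √lam * tan (√lam * t + arctan (ψ 0 / √lam)) ≤ ψ t := by
  set r := √lam
  have hr : 0 < r := sqrt_pos.2 hlam
  have hsub : Icc 0 t ⊆ Icc 0 T := Icc_subset_Icc_right ht.2
  have hcos : ∀ s ∈ Icc 0 t, cos (r * s + arctan (ψ 0 / r)) ≠ 0 := fun s hs => by
    refine (cos_pos_of_mem_Ioo ⟨?_, ?_⟩).ne'
    · nlinarith [neg_pi_div_two_lt_arctan (ψ 0 / r), hs.1]
    · nlinarith [hs.2]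
  refine riccati_subsolution_le_supersolution (fun s hs => hasDerivAt_mul_tan_riccati (hcos s hs))
    (fun s _ => by rw [sq_sqrt hlam.le]) (fun s hs => hψ s (hsub hs))
    (fun s hs => hψ' s (hsub hs)) ?_ ⟨ht.1, le_rfl⟩
  simp only [mul_zero, zero_add, tan_arctan]
  rw [mul_div_cancel₀ _ hr.ne']

theorem neg_tanh_le_of_riccati_supersolution (hψ : ∀ s ∈ Icc 0 T, HasDerivAt ψ (ψ' s) s)
    (hψ' : ∀ s ∈ Icc 0 T, ψ s ^ 2 + lam ≤ ψ' s) (hlam : lam < 0) {t : ℝ} (ht : t ∈ Icc 0 T)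
    (h0 : |ψ 0| < √(-lam)) :
    -(√(-lam) * tanh (√(-lam) * t + arctanh (-ψ 0 / √(-lam)))) ≤ ψ t := by
  set r := √(-lam)
  have hr : 0 < r := sqrt_pos.2 (neg_pos.2 hlam)
  have hsub : Icc 0 t ⊆ Icc 0 T := Icc_subset_Icc_right ht.2
  have hmem : -ψ 0 / r ∈ Ioo (-1) 1 := by
    rw [mem_Ioo, lt_div_iff₀ hr, div_lt_iff₀ hr]
    constructor <;> linarith [abs_lt.1 h0]
  refine riccati_subsolution_le_supersolution (fun s _ => hasDerivAt_neg_mul_tanh_riccati r _ s)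
    (fun s _ => by rw [sq_sqrt (neg_nonneg.2 hlam.le)]; linarith) (fun s hs => hψ s (hsub hs))
    (fun s hs => hψ' s (hsub hs)) ?_ ⟨ht.1, le_rfl⟩
  simp only [mul_zero, zero_add, tanh_arctanh hmem]
  rw [mul_div_cancel₀ _ hr.ne', neg_neg]

theorem neg_inv_le_of_riccati_supersolution (hψ : ∀ s ∈ Icc 0 T, HasDerivAt ψ (ψ' s) s)
    (hψ' : ∀ s ∈ Icc 0 T, ψ s ^ 2 + lam ≤ ψ' s) (hlam : lam = 0) {c t : ℝ} (hc : c * ψ 0 = -1)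
    (ht : t ∈ Icc 0 T) (htc : t + c ≠ 0) : -(1 / (t + c)) ≤ ψ t := by
  have hc0 : c ≠ 0 := by rintro rfl; simp at hc
  have below : ∀ s ∈ Icc 0 T, (∀ r ∈ Icc 0 s, r + c ≠ 0) → -(1 / (s + c)) ≤ ψ s :=
    fun s hs hne => riccati_subsolution_le_supersolution
      (fun r hr => hasDerivAt_neg_inv_riccati (hne r hr)) (fun r _ => by rw [hlam, add_zero])
      (fun r hr => hψ r (Icc_subset_Icc_right hs.2 hr))
      (fun r hr => hψ' r (Icc_subset_Icc_right hs.2 hr))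
      (le_of_eq (by rw [zero_add]; field_simp; linarith)) ⟨hs.1, le_rfl⟩
  rcases lt_or_gt_of_ne htc with htc | htc
  · exact below t ht fun r hr => by linarith [hr.2]
  rcases lt_or_gt_of_ne hc0.symm with hc0 | hc0
  · exact below t ht fun r hr => by linarith [hr.1]
  -- `-1/(s + c)` blows up at `-c ∈ (0, t)`, where the continuous `ψ` would have to follow it
  refine absurd ?_
    (not_eventually_inv_sub_le (hψ (-c) ⟨by linarith, by linarith [ht.2]⟩).continuousAt)
  filter_upwards [Ioo_mem_nhdsLT (neg_pos.2 hc0)] with s hs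
  have := below s ⟨hs.1.le, by linarith [ht.2, hs.2]⟩ fun r hr => by linarith [hr.2, hs.2]
  rwa [show (-c - s)⁻¹ = -(1 / (s + c)) by rw [one_div, ← inv_neg]; congr 1; ring]

end RiccatiSupersolution

theorem sq_dotProduct_le_mul {ι R : Type*} [Fintype ι] [CommRing R] [LinearOrder R]
    [IsStrictOrderedRing R] (v w : ι → R) :
    (v ⬝ᵥ w) ^ 2 ≤ (v ⬝ᵥ v) * (w ⬝ᵥ w) := by
  simpa only [dotProduct, sq] using Finset.sum_mul_sq_le_sq_mul_sq Finset.univ v w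

theorem dotProduct_mul_self_mulVec {ι R : Type*} [Fintype ι] [CommSemiring R] {A : Matrix ι ι R}
    (hA : A.IsSymm) (v : ι → R) :
    v ⬝ᵥ ((A * A) *ᵥ v) = (A *ᵥ v) ⬝ᵥ (A *ᵥ v) := by
  rw [← mulVec_mulVec, dotProduct_mulVec, ← vecMul_transpose, hA.eq]

theorem riccati_dotProduct_mulVec_of_posSemidef {ι : Type*} [Fintype ι] [DecidableEq ι]
    {A A' : Matrix ι ι ℝ} {α β : ℝ} (hA : A.IsSymm) (h : (A' - (A * A + α • A + β • 1)).PosSemidef)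
    {v : ι → ℝ} (hv : v ⬝ᵥ v = 1) :
    (v ⬝ᵥ (A *ᵥ v)) ^ 2 + α * (v ⬝ᵥ (A *ᵥ v)) + β ≤ v ⬝ᵥ (A' *ᵥ v) := by
  have hpsd := h.dotProduct_mulVec_nonneg v
  simp only [sub_mulVec, add_mulVec, smul_mulVec, one_mulVec, dotProduct_sub, dotProduct_add,
    dotProduct_smul, smul_eq_mul, star_trivial, hv, dotProduct_mul_self_mulVec hA] at hpsd
  nlinarith [sq_dotProduct_le_mul v (A *ᵥ v)]

theorem hasDerivAt_dotProduct_mulVec {ι : Type*} [Fintype ι] {W : ℝ → Matrix ι ι ℝ}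
    {W' : Matrix ι ι ℝ} {t : ℝ} (h : ∀ i j, HasDerivAt (fun s => W s i j) (W' i j) t)
    (v w : ι → ℝ) :
    HasDerivAt (fun s => v ⬝ᵥ (W s *ᵥ w)) (v ⬝ᵥ (W' *ᵥ w)) t := by
  simp only [dotProduct, mulVec]
  exact HasDerivAt.fun_sum fun i _ =>
    (HasDerivAt.fun_sum fun j _ => (h i j).mul_const (w j)).const_mul (v i)

theorem stmt_13_general {n : ℕ} (T : ℝ) (α β : ℝ)
    (W W' : ℝ → Matrix (Fin n) (Fin n) ℝ)
    (hWsymm : ∀ t ∈ Set.Icc 0 T, (W t).IsSymm)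
    (hWderiv : ∀ t ∈ Set.Icc 0 T, ∀ i j, HasDerivAt (fun s => W s i j) (W' t i j) t)
    (hODI : ∀ t ∈ Set.Icc 0 T,
      (W' t - (W t * W t + α • W t + β • (1 : Matrix (Fin n) (Fin n) ℝ))).PosSemidef)
    (θ : Fin n → ℝ) (hθ : (∑ i, θ i ^ 2) = 1) :
    ∀ t ∈ Set.Icc 0 T,
      ((0 < β - α ^ 2 / 4 →
        Real.sqrt (β - α ^ 2 / 4) * t +
            Real.arctan ((dotProduct θ ((W 0).mulVec θ) + α / 2) /
              Real.sqrt (β - α ^ 2 / 4)) ∈ Set.Ioo (-(Real.pi / 2)) (Real.pi / 2) →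
        Real.sqrt (β - α ^ 2 / 4) *
            Real.tan (Real.sqrt (β - α ^ 2 / 4) * t +
              Real.arctan ((dotProduct θ ((W 0).mulVec θ) + α / 2) /
                Real.sqrt (β - α ^ 2 / 4))) - α / 2 ≤
          dotProduct θ ((W t).mulVec θ)) ∧
      (β - α ^ 2 / 4 = 0 →
        2 * dotProduct θ ((W 0).mulVec θ) + α ≠ 0 →
        t + (-2 / (2 * dotProduct θ ((W 0).mulVec θ) + α)) ≠ 0 →
        -(1 / (t + (-2 / (2 * dotProduct θ ((W 0).mulVec θ) + α)))) - α / 2 ≤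
          dotProduct θ ((W t).mulVec θ)) ∧
      (β - α ^ 2 / 4 < 0 →
        |dotProduct θ ((W 0).mulVec θ) + α / 2| < Real.sqrt (-(β - α ^ 2 / 4)) →
        -(Real.sqrt (-(β - α ^ 2 / 4)) *
            Real.tanh (Real.sqrt (-(β - α ^ 2 / 4)) * t +
              arctanh (-(dotProduct θ ((W 0).mulVec θ) + α / 2) /
                Real.sqrt (-(β - α ^ 2 / 4))))) - α / 2 ≤
          dotProduct θ ((W t).mulVec θ))) := by
  intro t ht
  set φ := fun s => θ ⬝ᵥ (W s *ᵥ θ)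
  have hθθ : θ ⬝ᵥ θ = 1 := by simpa only [dotProduct, sq] using hθ
  have hψ : ∀ s ∈ Icc 0 T, HasDerivAt (fun s => φ s + α / 2) (θ ⬝ᵥ (W' s *ᵥ θ)) s :=
    fun s hs => (hasDerivAt_dotProduct_mulVec (hWderiv s hs) θ θ).add_const _
  have hψ' : ∀ s ∈ Icc 0 T, (φ s + α / 2) ^ 2 + (β - α ^ 2 / 4) ≤ θ ⬝ᵥ (W' s *ᵥ θ) :=
    fun s hs => by
      linear_combination riccati_dotProduct_mulVec_of_posSemidef (hWsymm s hs) (hODI s hs) hθθ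
  refine ⟨fun hlam hlt => ?_, fun hlam hc htc => ?_, fun hlam h0 => ?_⟩
  · linarith [tan_le_of_riccati_supersolution hψ hψ' hlam ht hlt.2]
  · have hc₂ : -2 / (2 * φ 0 + α) * (φ 0 + α / 2) = -1 := by
      field_simp [show 2 * φ 0 + α ≠ 0 from hc]
    linarith [neg_inv_le_of_riccati_supersolution hψ hψ' hlam hc₂ ht htc]
  · linarith [neg_tanh_le_of_riccati_supersolution hψ hψ' hlam ht h0]

/-- **Scalar comparison for matrix Riccati differential inequalities** (Lemma 10.5):
if `W : [0,T] → Mₙ(ℝ)` is a differentiable family of symmetric matrices with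
`dW/dt ⪰ W² + αW + β·Id`, `θ` a unit vector, `φ(t) = ⟨W(t)θ,θ⟩`, `c = φ(0)` and
`λ = β − α²/4`, then `φ(t) ≥ ξ_λ(t) − α/2` wherever `ξ_λ` is defined and finite, where
`ξ_λ(t) = √λ tan(√λ t + c₁)` if `λ > 0`, `−1/(t+c₂)` if `λ = 0`, and
`−√(−λ) tanh(√(−λ) t + c₃)` if `λ < 0`. -/
theorem stmt_13 {n : ℕ} (T : ℝ) (hT : 0 < T) (α β : ℝ)
    (W W' : ℝ → Matrix (Fin n) (Fin n) ℝ)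
    (hWsymm : ∀ t ∈ Set.Icc 0 T, (W t).IsSymm)
    (hWderiv : ∀ t ∈ Set.Icc 0 T, ∀ i j, HasDerivAt (fun s => W s i j) (W' t i j) t)
    (hODI : ∀ t ∈ Set.Icc 0 T,
      (W' t - (W t * W t + α • W t + β • (1 : Matrix (Fin n) (Fin n) ℝ))).PosSemidef)
    (θ : Fin n → ℝ) (hθ : (∑ i, θ i ^ 2) = 1) :
    ∀ t ∈ Set.Icc 0 T,
      ((0 < β - α ^ 2 / 4 →
        Real.sqrt (β - α ^ 2 / 4) * t +
            Real.arctan ((dotProduct θ ((W 0).mulVec θ) + α / 2) /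
              Real.sqrt (β - α ^ 2 / 4)) ∈ Set.Ioo (-(Real.pi / 2)) (Real.pi / 2) →
        Real.sqrt (β - α ^ 2 / 4) *
            Real.tan (Real.sqrt (β - α ^ 2 / 4) * t +
              Real.arctan ((dotProduct θ ((W 0).mulVec θ) + α / 2) /
                Real.sqrt (β - α ^ 2 / 4))) - α / 2 ≤
          dotProduct θ ((W t).mulVec θ)) ∧
      (β - α ^ 2 / 4 = 0 →
        2 * dotProduct θ ((W 0).mulVec θ) + α ≠ 0 →
        t + (-2 / (2 * dotProduct θ ((W 0).mulVec θ) + α)) ≠ 0 →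
        -(1 / (t + (-2 / (2 * dotProduct θ ((W 0).mulVec θ) + α)))) - α / 2 ≤
          dotProduct θ ((W t).mulVec θ)) ∧
      (β - α ^ 2 / 4 < 0 →
        |dotProduct θ ((W 0).mulVec θ) + α / 2| < Real.sqrt (-(β - α ^ 2 / 4)) →
        -(Real.sqrt (-(β - α ^ 2 / 4)) *
            Real.tanh (Real.sqrt (-(β - α ^ 2 / 4)) * t +
              arctanh (-(dotProduct θ ((W 0).mulVec θ) + α / 2) /
                Real.sqrt (-(β - α ^ 2 / 4))))) - α / 2 ≤
          dotProduct θ ((W t).mulVec θ))) :=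
  stmt_13_general T α β W W' hWsymm hWderiv hODI θ hθ
end
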